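/- Let H ∈ M_{n×m}(ℝ) have linearly independent columns, let x ∈ ℤ^m, y ∈ ℝ^n, and w = y − Hx. Let h′_1, …, h′_m be an LLL-reduced basis of L(H) with parameter δ ∈ (1/4, 1), α = 1/(δ − 1/4), and set t = ε a(H′) where 0 < ε ≤ 1/(2√2 · α^{m − 1/2}). If ‖w‖ ≤ ε d_H, then the vector v = (Hx − y, t) ∈ ℝ^{n+1} is an α^{m/2}-unique shortest vector of the augmented lattice L(H̃). -/

import Mathlib

open scoped BigOperators

/-- Gram-Schmidt orthogonalization of the system of vectors `h`. -/
noncomputable def gso {n m : ℕ} (h : Fin m → EuclideanSpace ℝ (Fin n)) :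
    Fin m → EuclideanSpace ℝ (Fin n) :=
  @InnerProductSpace.gramSchmidt ℝ (EuclideanSpace ℝ (Fin n)) _ _ _ (Fin m) _ _
    (inferInstance : WellFoundedLT (Fin m)) h

/-- Gram-Schmidt coefficients `μ i j = ⟨h i, h* j⟩ / ‖h* j‖²`. -/
noncomputable def mu {n m : ℕ} (h : Fin m → EuclideanSpace ℝ (Fin n)) (i j : Fin m) : ℝ :=
  (inner ℝ (h i) (gso h j) : ℝ) / ‖gso h j‖ ^ 2

/-- The lattice generated by the vectors `h`. -/
def latticePts {n m : ℕ} (h : Fin m → EuclideanSpace ℝ (Fin n)) :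
    Set (EuclideanSpace ℝ (Fin n)) :=
  {v | ∃ x : Fin m → ℤ, v = ∑ i, (x i : ℝ) • h i}

/-- `a(H)`: the minimum norm of the Gram-Schmidt vectors. -/
noncomputable def aMin {n m : ℕ} (h : Fin m → EuclideanSpace ℝ (Fin n)) : ℝ :=
  ⨅ i, ‖gso h i‖

/-- `A(H)`: the maximum norm of the Gram-Schmidt vectors. -/
noncomputable def AMax {n m : ℕ} (h : Fin m → EuclideanSpace ℝ (Fin n)) : ℝ :=
  ⨆ i, ‖gso h i‖

/-- LLL-reducedness (size reduction + Lovász condition) with parameter `δ`. -/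
def IsLLLReduced {n m : ℕ} (δ : ℝ) (h : Fin m → EuclideanSpace ℝ (Fin n)) : Prop :=
  (∀ k l : Fin m, l < k → |mu h k l| ≤ 1 / 2) ∧
  (∀ k l : Fin m, (l : ℕ) + 1 = (k : ℕ) →
    δ * ‖gso h l‖ ^ 2 ≤ ‖gso h k + mu h k l • gso h l‖ ^ 2)

/-- Append the coordinate `c` to the vector `v`. -/
noncomputable def aug {n : ℕ} (v : EuclideanSpace ℝ (Fin n)) (c : ℝ) :
    EuclideanSpace ℝ (Fin (n + 1)) :=
  (WithLp.equiv 2 (Fin (n + 1) → ℝ)).symm (Fin.snoc ((WithLp.equiv 2 (Fin n → ℝ)) v) c)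

/-- Columns of the augmented matrix `H̃`: the columns `(h i, 0)` followed by `(-y, t)`. -/
noncomputable def augCols {n m : ℕ} (h : Fin m → EuclideanSpace ℝ (Fin n))
    (y : EuclideanSpace ℝ (Fin n)) (t : ℝ) : Fin (m + 1) → EuclideanSpace ℝ (Fin (n + 1)) :=
  Fin.snoc (fun i => aug (h i) 0) (aug (-y) t)

/-- `v` is a `γ`-unique shortest vector of the lattice `L`. -/
def IsUniqueShortest {N : ℕ} (L : Set (EuclideanSpace ℝ (Fin N))) (γ : ℝ)
    (v : EuclideanSpace ℝ (Fin N)) : Prop :=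
  v ∈ L ∧ v ≠ 0 ∧ (∀ u ∈ L, u ≠ 0 → ‖v‖ ≤ ‖u‖) ∧
    ∀ u ∈ L, ‖u‖ ≤ γ * ‖v‖ → ¬ LinearIndependent ℝ ![u, v]

/-!
Write `w = y - Hx` and `v = (-w, t)`, `t = ε a(H')`. Every point of `L(H̃)` is `(z - q w, q t)`
with `z ∈ L(H)` and `q ∈ ℤ`, and it equals `q v` exactly when `z = 0`. Otherwise
`‖z‖ ≥ d_H ≥ a(H')`, so with `s = |q| ε` its squared norm is at least
`(1 - s)₊² d_H² + s² a(H')² ≥ a(H')² / 2`. On the other hand the LLL bound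
`d_H² ≤ ‖h'_1‖² ≤ α^(m-1) a(H')²` and the choice of `ε` give
`α^m ‖v‖² ≤ 2 ε² α^(2m-1) a(H')² ≤ a(H')² / 4`, so every point of norm at most `α^(m/2) ‖v‖`
is an integer multiple of `v`.
-/

open scoped RealInnerProductSpace

section GramSchmidt

open InnerProductSpace

variable {n m : ℕ} (h : Fin m → EuclideanSpace ℝ (Fin n))

lemma gso_eq_gramSchmidt : gso h = gramSchmidt ℝ h := rfl

lemma gso_orthogonal {a b : Fin m} (hab : a ≠ b) : ⟪gso h a, gso h b⟫ = 0 :=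
  gramSchmidt_orthogonal ℝ h hab

lemma inner_gso_of_lt {i k : Fin m} (hik : i < k) : ⟪h i, gso h k⟫ = 0 := by
  rw [real_inner_comm]
  exact gramSchmidt_inv_triangular ℝ h hik

lemma inner_gso_self (k : Fin m) : ⟪h k, gso h k⟫ = ‖gso h k‖ ^ 2 := by
  rw [gso_eq_gramSchmidt]
  conv_lhs => rw [gramSchmidt_def'' ℝ h k]
  rw [inner_add_left, real_inner_self_eq_norm_sq, sum_inner, add_eq_left]
  refine Finset.sum_eq_zero fun i hi => ?_
  rw [real_inner_smul_left, gramSchmidt_orthogonal ℝ h (Finset.mem_Iio.1 hi).ne, mul_zero]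

lemma gso_zero [NeZero m] : gso h 0 = h 0 := by
  have hIio : Finset.Iio (0 : Fin m) = ∅ := by ext i; simp
  rw [gso_eq_gramSchmidt, gramSchmidt_def, hIio, Finset.sum_empty, sub_zero]

lemma aMin_le (i : Fin m) : aMin h ≤ ‖gso h i‖ :=
  ciInf_le (Finite.bddBelow_range _) i

lemma aMin_pos [NeZero m] (hli : LinearIndependent ℝ h) : 0 < aMin h := by
  obtain ⟨i, hi⟩ := Finite.exists_min (fun i => ‖gso h i‖)
  exact (norm_pos_iff.2 (gramSchmidt_ne_zero i hli)).trans_le (le_ciInf hi)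

lemma exists_norm_gso_le_of_mem_latticePts {u : EuclideanSpace ℝ (Fin n)}
    (hu : u ∈ latticePts h) (hu0 : u ≠ 0) : ∃ k, ‖gso h k‖ ≤ ‖u‖ := by
  classical
  obtain ⟨c, rfl⟩ := hu
  have hc : (Finset.univ.filter (c · ≠ 0)).Nonempty := by
    by_contra! hc
    refine hu0 (Finset.sum_eq_zero fun i _ => ?_)
    have : c i = 0 := by simpa using Finset.filter_eq_empty_iff.1 hc (Finset.mem_univ i)
    simp [this]
  obtain ⟨k, hk, hmax⟩ := Finset.exists_max_image _ id hc
  have hck : c k ≠ 0 := (Finset.mem_filter.1 hk).2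
  -- the last nonzero coefficient is the only one seen by `gso h k`
  have hinner : ⟪∑ i, (c i : ℝ) • h i, gso h k⟫ = c k * ‖gso h k‖ ^ 2 := by
    rw [sum_inner, Finset.sum_eq_single k, real_inner_smul_left, inner_gso_self]
    · intro i _ hik
      rcases hik.lt_or_gt with hlt | hgt
      · rw [real_inner_smul_left, inner_gso_of_lt h hlt, mul_zero]
      · have : c i = 0 := by
          by_contra hci
          exact hgt.not_ge (hmax i (by simpa using hci))
        simp [this]
    · simp
  have hck1 : (1 : ℝ) ≤ |(c k : ℝ)| := by exact_mod_cast Int.one_le_abs hck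
  have hcs : ‖gso h k‖ ^ 2 ≤ ‖∑ i, (c i : ℝ) • h i‖ * ‖gso h k‖ :=
    calc ‖gso h k‖ ^ 2 ≤ |(c k : ℝ)| * ‖gso h k‖ ^ 2 :=
          le_mul_of_one_le_left (by positivity) hck1
      _ = |⟪∑ i, (c i : ℝ) • h i, gso h k⟫| := by rw [hinner, abs_mul, abs_pow, abs_norm]
      _ ≤ _ := abs_real_inner_le_norm _ _
  refine ⟨k, ?_⟩
  by_contra! hlt
  nlinarith [norm_nonneg (∑ i, (c i : ℝ) • h i)]

lemma aMin_le_norm_of_mem_latticePts {u : EuclideanSpace ℝ (Fin n)} (hu : u ∈ latticePts h)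
    (hu0 : u ≠ 0) : aMin h ≤ ‖u‖ :=
  let ⟨k, hk⟩ := exists_norm_gso_le_of_mem_latticePts h hu hu0
  (aMin_le h k).trans hk

end GramSchmidt

namespace IsLLLReduced

variable {n m : ℕ} {h : Fin m → EuclideanSpace ℝ (Fin n)} {δ : ℝ}

lemma mul_norm_gso_sq_le (hred : IsLLLReduced δ h) {l k : Fin m} (hlk : (l : ℕ) + 1 = k) :
    (δ - 1 / 4) * ‖gso h l‖ ^ 2 ≤ ‖gso h k‖ ^ 2 := by
  have hlt : l < k := by rw [Fin.lt_def]; omega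
  have hlov := hred.2 k l hlk
  rw [norm_add_sq_real, real_inner_smul_right, gso_orthogonal h hlt.ne', mul_zero, mul_zero,
    add_zero, norm_smul, Real.norm_eq_abs, mul_pow, sq_abs] at hlov
  have hμ : mu h k l ^ 2 ≤ 1 / 4 := by
    have := hred.1 k l hlt
    nlinarith [abs_nonneg (mu h k l), sq_abs (mu h k l)]
  nlinarith [sq_nonneg ‖gso h l‖]

lemma pow_mul_norm_sq_le_norm_gso_sq [NeZero m] (hred : IsLLLReduced δ h) (hδ : 1 / 4 < δ)
    (i : Fin m) : (δ - 1 / 4) ^ (i : ℕ) * ‖h 0‖ ^ 2 ≤ ‖gso h i‖ ^ 2 := by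
  obtain ⟨k, rfl⟩ := Nat.exists_eq_succ_of_ne_zero (NeZero.ne m)
  induction i using Fin.induction with
  | zero => simp [gso_zero]
  | succ i ih =>
    calc (δ - 1 / 4) ^ (i.succ : ℕ) * ‖h 0‖ ^ 2
        = (δ - 1 / 4) * ((δ - 1 / 4) ^ (i.castSucc : ℕ) * ‖h 0‖ ^ 2) := by
          rw [Fin.val_succ, Fin.val_castSucc, pow_succ, mul_comm _ (δ - 1 / 4), mul_assoc]
      _ ≤ (δ - 1 / 4) * ‖gso h i.castSucc‖ ^ 2 := by gcongr
      _ ≤ ‖gso h i.succ‖ ^ 2 := hred.mul_norm_gso_sq_le (by simp)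

lemma norm_sq_le_pow_mul_aMin_sq [NeZero m] (hred : IsLLLReduced δ h) (hδ₁ : 1 / 4 < δ)
    (hδ₂ : δ ≤ 1) : ‖h 0‖ ^ 2 ≤ (1 / (δ - 1 / 4)) ^ (m - 1) * aMin h ^ 2 := by
  obtain ⟨i, hi⟩ := Finite.exists_min (fun i => ‖gso h i‖)
  have haMin : aMin h = ‖gso h i‖ := le_antisymm (aMin_le h i) (le_ciInf hi)
  have hβ : 0 < δ - 1 / 4 := by linarith
  have hα : 1 ≤ 1 / (δ - 1 / 4) := by rw [le_div_iff₀ hβ]; linarith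
  calc ‖h 0‖ ^ 2 ≤ (1 / (δ - 1 / 4)) ^ (i : ℕ) * ‖gso h i‖ ^ 2 := by
        rw [div_pow, one_pow, one_div_mul_eq_div, le_div_iff₀ (by positivity), mul_comm]
        exact hred.pow_mul_norm_sq_le_norm_gso_sq hδ₁ i
    _ ≤ (1 / (δ - 1 / 4)) ^ (m - 1) * aMin h ^ 2 := by
        rw [haMin]; gcongr; omega

end IsLLLReduced

lemma half_sq_le_norm_sub_smul_sq_add_sq {E : Type*} [NormedAddCommGroup E] [NormedSpace ℝ E]
    {z w : E} {a d ε : ℝ} (ha : 0 ≤ a) (had : a ≤ d) (hz : d ≤ ‖z‖) (hε : 0 ≤ ε)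
    (hw : ‖w‖ ≤ ε * d) (q : ℝ) : a ^ 2 / 2 ≤ ‖z - q • w‖ ^ 2 + (q * (ε * a)) ^ 2 := by
  set s := |q| * ε
  have hs : 0 ≤ s := by positivity
  have hA : (1 - s) * d ≤ ‖z - q • w‖ := by
    have := norm_sub_norm_le z (q • w)
    rw [norm_smul, Real.norm_eq_abs] at this
    nlinarith [abs_nonneg q]
  have hqa : (q * (ε * a)) ^ 2 = (s * a) ^ 2 := by
    rw [← sq_abs, abs_mul, abs_mul, abs_of_nonneg hε, abs_of_nonneg ha, ← mul_assoc]
  rw [hqa]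
  rcases le_or_gt s 1 with hs1 | hs1
  · -- `(1 - s)² + s² = 1 / 2 + 2 (s - 1 / 2)²`
    have : (1 - s) * a ≤ ‖z - q • w‖ := le_trans (by gcongr) hA
    nlinarith [sq_nonneg (2 * s - 1), mul_nonneg (sub_nonneg.2 hs1) ha]
  · nlinarith [sq_nonneg a, mul_le_mul hs1.le hs1.le zero_le_one hs]

lemma isUniqueShortest_of_forall_eq_intCast_smul_or_lt_norm {N : ℕ}
    {L : Set (EuclideanSpace ℝ (Fin N))} {γ : ℝ} {v : EuclideanSpace ℝ (Fin N)} (hv : v ∈ L)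
    (hv0 : v ≠ 0) (hγ : 1 ≤ γ)
    (H : ∀ u ∈ L, (∃ q : ℤ, u = (q : ℝ) • v) ∨ γ * ‖v‖ < ‖u‖) : IsUniqueShortest L γ v := by
  refine ⟨hv, hv0, fun u hu hu0 => ?_, fun u hu hle => ?_⟩
  · rcases H u hu with ⟨q, rfl⟩ | hlt
    · have hq : q ≠ 0 := by rintro rfl; simp at hu0
      have hq1 : (1 : ℝ) ≤ |(q : ℝ)| := by exact_mod_cast Int.one_le_abs hq
      rw [norm_smul, Real.norm_eq_abs]
      exact le_mul_of_one_le_left (norm_nonneg v) hq1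
    · exact (le_mul_of_one_le_left (norm_nonneg v) hγ).trans hlt.le
  · rcases H u hu with ⟨q, rfl⟩ | hlt
    · rw [LinearIndependent.pair_iff]
      intro hli
      simpa using hli 1 (-q) (by simp)
    · exact absurd hle hlt.not_ge

lemma eight_mul_sq_mul_rpow_le {α ε : ℝ} {m : ℕ} (hα : 0 < α) (hm : 0 < m) (hε0 : 0 ≤ ε)
    (hε : ε ≤ 1 / (2 * √2 * α ^ ((m : ℝ) - 1 / 2))) :
    8 * ε ^ 2 * ((α ^ ((m : ℝ) / 2)) ^ 2 * α ^ (m - 1)) ≤ 1 := by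
  set B := α ^ ((m : ℝ) - 1 / 2)
  have hB : (α ^ ((m : ℝ) / 2)) ^ 2 * α ^ (m - 1) = B ^ 2 := by
    simp only [B, ← Real.rpow_natCast, ← Real.rpow_mul hα.le, ← Real.rpow_add hα]
    push_cast [Nat.cast_sub hm]
    ring_nf
  have hεB : ε * (2 * √2 * B) ≤ 1 := by
    rwa [← le_div_iff₀ (by positivity)]
  have h2 : √2 ^ 2 = 2 := Real.sq_sqrt (by norm_num)
  rw [hB]
  nlinarith [mul_nonneg hε0 (by positivity : (0 : ℝ) ≤ 2 * √2 * B)]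

section AugmentedLattice

variable {n m : ℕ}

lemma sub_smul_mem_latticePts {h : Fin m → EuclideanSpace ℝ (Fin n)}
    {z p : EuclideanSpace ℝ (Fin n)} (hz : z ∈ latticePts h) (hp : p ∈ latticePts h) (q : ℤ) :
    z - (q : ℝ) • p ∈ latticePts h := by
  obtain ⟨c, rfl⟩ := hz
  obtain ⟨x, rfl⟩ := hp
  refine ⟨c - q • x, ?_⟩
  simp only [Pi.sub_apply, Pi.smul_apply, smul_eq_mul, Int.cast_sub, Int.cast_mul, sub_smul,
    mul_smul, Finset.sum_sub_distrib, Finset.smul_sum]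

lemma aug_apply (v : EuclideanSpace ℝ (Fin n)) (c : ℝ) (i : Fin (n + 1)) :
    aug v c i = Fin.snoc (α := fun _ => ℝ) v c i := rfl

lemma aug_add (a b : EuclideanSpace ℝ (Fin n)) (c d : ℝ) :
    aug a c + aug b d = aug (a + b) (c + d) := by
  ext i
  refine Fin.lastCases ?_ (fun j => ?_) i <;> simp [aug_apply]

lemma aug_smul (r : ℝ) (a : EuclideanSpace ℝ (Fin n)) (c : ℝ) :
    r • aug a c = aug (r • a) (r * c) := by
  ext i
  refine Fin.lastCases ?_ (fun j => ?_) i <;> simp [aug_apply]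

lemma aug_zero : aug (0 : EuclideanSpace ℝ (Fin n)) 0 = 0 := by
  simpa using (aug_smul 0 (0 : EuclideanSpace ℝ (Fin n)) 0).symm

lemma aug_sum {ι : Type*} (s : Finset ι) (f : ι → EuclideanSpace ℝ (Fin n)) (g : ι → ℝ) :
    ∑ i ∈ s, aug (f i) (g i) = aug (∑ i ∈ s, f i) (∑ i ∈ s, g i) := by
  classical
  induction s using Finset.induction_on with
  | empty => exact aug_zero.symm
  | insert _ _ hi ih =>
    rw [Finset.sum_insert hi, Finset.sum_insert hi, Finset.sum_insert hi, ih, aug_add]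

lemma norm_aug_sq (a : EuclideanSpace ℝ (Fin n)) (c : ℝ) :
    ‖aug a c‖ ^ 2 = ‖a‖ ^ 2 + c ^ 2 := by
  simp [EuclideanSpace.norm_sq_eq, Fin.sum_univ_castSucc, aug_apply]

lemma aug_ne_zero (a : EuclideanSpace ℝ (Fin n)) {c : ℝ} (hc : c ≠ 0) : aug a c ≠ 0 := by
  intro h
  exact hc (by simpa [aug_apply] using congrArg (· (Fin.last n)) h)

lemma norm_aug_sq_le {w : EuclideanSpace ℝ (Fin n)} {a d ε C : ℝ} (hw : ‖w‖ ≤ ε * d)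
    (hd : d ^ 2 ≤ C * a ^ 2) (hC : 1 ≤ C) : ‖aug w (ε * a)‖ ^ 2 ≤ 2 * ε ^ 2 * C * a ^ 2 := by
  rw [norm_aug_sq]
  calc ‖w‖ ^ 2 + (ε * a) ^ 2 ≤ ε ^ 2 * (C * a ^ 2) + ε ^ 2 * (C * a ^ 2) := by
        rw [mul_pow ε a]
        gcongr
        · exact (pow_le_pow_left₀ (norm_nonneg _) hw 2).trans (by rw [mul_pow]; gcongr)
        · exact le_mul_of_one_le_left (sq_nonneg a) hC
    _ = 2 * ε ^ 2 * C * a ^ 2 := by ring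

lemma sum_smul_augCols (h : Fin m → EuclideanSpace ℝ (Fin n)) (y : EuclideanSpace ℝ (Fin n))
    (t : ℝ) (z : Fin (m + 1) → ℤ) :
    ∑ i, (z i : ℝ) • augCols h y t i =
      aug (∑ i : Fin m, (z i.castSucc : ℝ) • h i - (z (Fin.last m) : ℝ) • y)
        ((z (Fin.last m) : ℝ) * t) := by
  simp only [Fin.sum_univ_castSucc, augCols, Fin.snoc_castSucc, Fin.snoc_last, aug_smul, aug_sum,
    aug_add, mul_zero, Finset.sum_const_zero, zero_add, smul_neg, sub_eq_add_neg]

lemma mem_latticePts_augCols_iff {h : Fin m → EuclideanSpace ℝ (Fin n)}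
    {y : EuclideanSpace ℝ (Fin n)} {t : ℝ} {u : EuclideanSpace ℝ (Fin (n + 1))} :
    u ∈ latticePts (augCols h y t) ↔
      ∃ z ∈ latticePts h, ∃ q : ℤ, u = aug (z - (q : ℝ) • y) (q * t) := by
  constructor
  · rintro ⟨c, rfl⟩
    exact ⟨_, ⟨fun i => c i.castSucc, rfl⟩, c (Fin.last m), sum_smul_augCols h y t c⟩
  · rintro ⟨_, ⟨c, rfl⟩, q, rfl⟩
    exact ⟨Fin.snoc c q, by simp [sum_smul_augCols]⟩

lemma eq_intCast_smul_or_lt_norm_of_mem_latticePts_augCols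
    {h : Fin m → EuclideanSpace ℝ (Fin n)} {x : Fin m → ℤ} {y : EuclideanSpace ℝ (Fin n)}
    {a d ε γ : ℝ}
    (hd : ∀ z ∈ latticePts h, z ≠ 0 → d ≤ ‖z‖) (ha : 0 ≤ a) (had : a ≤ d) (hε : 0 ≤ ε)
    (hw : ‖y - ∑ i, (x i : ℝ) • h i‖ ≤ ε * d)
    (hv : 2 * (γ * ‖aug (∑ i, (x i : ℝ) • h i - y) (ε * a)‖) ^ 2 < a ^ 2)
    {u : EuclideanSpace ℝ (Fin (n + 1))} (hu : u ∈ latticePts (augCols h y (ε * a))) :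
    (∃ q : ℤ, u = (q : ℝ) • aug (∑ i, (x i : ℝ) • h i - y) (ε * a)) ∨
      γ * ‖aug (∑ i, (x i : ℝ) • h i - y) (ε * a)‖ < ‖u‖ := by
  obtain ⟨z, hz, q, rfl⟩ := mem_latticePts_augCols_iff.1 hu
  set p := ∑ i, (x i : ℝ) • h i
  have hsplit : z - (q : ℝ) • y = (z - (q : ℝ) • p) - (q : ℝ) • (y - p) := by
    rw [smul_sub]; abel
  by_cases hz0 : z - (q : ℝ) • p = 0
  · refine .inl ⟨q, ?_⟩
    rw [aug_smul, hsplit, hz0, zero_sub, ← smul_neg, neg_sub, mul_comm]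
  · refine .inr (lt_of_pow_lt_pow_left₀ 2 (norm_nonneg _) ?_)
    have hzd : d ≤ ‖z - (q : ℝ) • p‖ := hd _ (sub_smul_mem_latticePts hz ⟨x, rfl⟩ q) hz0
    have := half_sq_le_norm_sub_smul_sq_add_sq ha had hzd hε hw q
    rw [norm_aug_sq, hsplit]
    linarith

end AugmentedLattice

theorem statement4_general {n m : ℕ} (hm : 0 < m)
    (h : Fin m → EuclideanSpace ℝ (Fin n))
    (x : Fin m → ℤ) (y : EuclideanSpace ℝ (Fin n))
    (h' : Fin m → EuclideanSpace ℝ (Fin n)) (hli' : LinearIndependent ℝ h')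
    (hsame : latticePts h' = latticePts h)
    (δ : ℝ) (hδ : δ ∈ Set.Ioo (1/4 : ℝ) 1)
    (hred : IsLLLReduced δ h')
    (α : ℝ) (hα : α = 1 / (δ - 1/4))
    (dH : ℝ) (hdH : IsLeast {r : ℝ | ∃ v ∈ latticePts h, v ≠ 0 ∧ ‖v‖ = r} dH)
    (ε t : ℝ) (hε0 : 0 < ε) (hε : ε ≤ 1 / (2 * Real.sqrt 2 * α ^ ((m : ℝ) - 1/2)))
    (ht : t = ε * aMin h')
    (hw : ‖y - ∑ i, (x i : ℝ) • h i‖ ≤ ε * dH) :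
    IsUniqueShortest (latticePts (augCols h y t)) (α ^ ((m : ℝ) / 2))
      (aug (∑ i, (x i : ℝ) • h i - y) t) := by
  have : NeZero m := ⟨hm.ne'⟩
  subst ht
  set a := aMin h'
  have hα1 : 1 ≤ α := by rw [hα, le_div_iff₀ (by linarith [hδ.1])]; linarith [hδ.2]
  have ha : 0 < a := aMin_pos h' hli'
  have hd : ∀ z ∈ latticePts h, z ≠ 0 → dH ≤ ‖z‖ := fun z hz hz0 => hdH.2 ⟨z, hz, hz0, rfl⟩
  have had : a ≤ dH := by
    obtain ⟨z, hz, hz0, rfl⟩ := hdH.1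
    exact aMin_le_norm_of_mem_latticePts h' (hsame ▸ hz) hz0
  have hdα : dH ^ 2 ≤ α ^ (m - 1) * a ^ 2 := by
    have hh'0 : h' 0 ∈ latticePts h := hsame ▸ ⟨Pi.single 0 1, by simp [Pi.single_apply]⟩
    calc dH ^ 2 ≤ ‖h' 0‖ ^ 2 := by gcongr; exacts [ha.le.trans had, hd _ hh'0 (hli'.ne_zero 0)]
      _ ≤ α ^ (m - 1) * a ^ 2 := hα ▸ hred.norm_sq_le_pow_mul_aMin_sq hδ.1 hδ.2.le
  have hv : 2 * (α ^ ((m : ℝ) / 2) * ‖aug (∑ i, (x i : ℝ) • h i - y) (ε * a)‖) ^ 2 < a ^ 2 := by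
    have hnorm := norm_aug_sq_le ((norm_sub_rev _ _).trans_le hw) hdα (one_le_pow₀ hα1)
    have hε' := eight_mul_sq_mul_rpow_le (hα1.trans_lt' one_pos) hm hε0.le hε
    nlinarith
  refine isUniqueShortest_of_forall_eq_intCast_smul_or_lt_norm ?_ (aug_ne_zero _ (by positivity))
    (Real.one_le_rpow hα1 (by positivity)) fun u hu =>
      eq_intCast_smul_or_lt_norm_of_mem_latticePts_augCols hd ha.le had hε0.le hw hv hu
  exact mem_latticePts_augCols_iff.2 ⟨_, ⟨x, rfl⟩, 1, by simp⟩

/-- if `t = ε a(H')` with `0 < ε ≤ 1/(2√2 α^(m-1/2))` and `‖w‖ ≤ ε d_H`, then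
`v = (Hx - y, t)` is an `α^(m/2)`-unique shortest vector of the augmented lattice `L(H̃)`. -/
theorem statement4 {n m : ℕ} (hm : 0 < m)
    (h : Fin m → EuclideanSpace ℝ (Fin n)) (hli : LinearIndependent ℝ h)
    (x : Fin m → ℤ) (y : EuclideanSpace ℝ (Fin n))
    (h' : Fin m → EuclideanSpace ℝ (Fin n)) (hli' : LinearIndependent ℝ h')
    (hsame : latticePts h' = latticePts h)
    (δ : ℝ) (hδ : δ ∈ Set.Ioo (1/4 : ℝ) 1)
    (hred : IsLLLReduced δ h')
    (α : ℝ) (hα : α = 1 / (δ - 1/4))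
    (dH : ℝ) (hdH : IsLeast {r : ℝ | ∃ v ∈ latticePts h, v ≠ 0 ∧ ‖v‖ = r} dH)
    (ε t : ℝ) (hε0 : 0 < ε) (hε : ε ≤ 1 / (2 * Real.sqrt 2 * α ^ ((m : ℝ) - 1/2)))
    (ht : t = ε * aMin h')
    (hw : ‖y - ∑ i, (x i : ℝ) • h i‖ ≤ ε * dH) :
    IsUniqueShortest (latticePts (augCols h y t)) (α ^ ((m : ℝ) / 2))
      (aug (∑ i, (x i : ℝ) • h i - y) t) :=
  statement4_general hm h x y h' hli' hsame δ hδ hred α hα dH hdH ε t hε0 hε ht hw
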